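/- arXiv:1606.03566 — 2 statements merged into one kernel-verified Lean document; each statement's English description precedes it below -/
import Mathlib

section
/- If P and Q are finite posets on d elements having a common linear extension, then the Ehrhart polynomials of Ω(O_P, O_Q), Ω(O_P, C_Q), and Ω(C_P, C_Q) coincide. -/
open scoped Pointwise

def orderPolytope {d : ℕ} (r : Fin d → Fin d → Prop) : Set (Fin d → ℝ) :=
  {x | (∀ i, 0 ≤ x i ∧ x i ≤ 1) ∧ ∀ i j, r i j → x j ≤ x i}

def chainPolytope {d : ℕ} (r : Fin d → Fin d → Prop) : Set (Fin d → ℝ) :=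
  {x | (∀ i, 0 ≤ x i) ∧
    ∀ c : Finset (Fin d), IsMaxChain r (c : Set (Fin d)) → ∑ i ∈ c, x i ≤ 1}

def OmegaPoly {d : ℕ} (A B : Set (Fin d → ℝ)) : Set (Fin (d + 1) → ℝ) :=
  convexHull ℝ
    (((fun x => Fin.snoc x (1 : ℝ)) '' A) ∪ ((fun x => Fin.snoc (-x) (-1 : ℝ)) '' B))

/-- The Ehrhart counting function: the number of lattice points of `n𝒫`. -/
noncomputable def ehrhart {m : ℕ} (S : Set (Fin m → ℝ)) (n : ℕ) : ℕ :=
  Set.ncard {a : Fin m → ℤ | (fun i => (a i : ℝ)) ∈ (n : ℝ) • S}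

/-!
A lattice point of `n • Ω(A, B)` at height `k` is `(y, k)` with `|k| ≤ n` and
`y ∈ s • A - s' • B`, where `s = (n + k) / 2` and `s' = (n - k) / 2`. All three polytopes
have the form `{x ≥ 0 | x antitone along R, ∑_{i ∈ c} x i ≤ 1 for c ∈ 𝒞}`: `O_P` with
`R = <_P` and `𝒞` the singletons, `C_P` with `R = ∅` and `𝒞` the maximal chains of `P`.
For such `A` and `B`, an integral `y` lies in `s • A - s' • B` iff `y = u - v` with natural
vectors `u ∈ ⌊s⌋ • A` and `v ∈ ⌊s'⌋ • B` that cannot both be lowered at any coordinate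
(lower the floors of a real splitting as long as possible). This tight splitting is unique
as soon as `R ∪ S` is acyclic, which is what the common linear extension provides, so
lattice points are counted by tight pairs. Stanley's transfer map
`v ↦ (v i - max_{j > i} v j)_i` is a bijection from tight pairs for `(R, <_Q)` to tight
pairs for `(R, ∅)`, and it turns the order-polytope bound on `v` into the chain-polytope
one. Applied to `v`, then by symmetry to `u`, it gives the two equalities.
-/

open Finset

variable {ι : Type*}

def AntitoneAlong {α : Type*} [LE α] (R : ι → ι → Prop) (x : ι → α) : Prop :=
  ∀ i j, R i j → x j ≤ x i

def antitonePolytope (R : ι → ι → Prop) (𝒞 : Set (Finset ι)) : Set (ι → ℝ) :=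
  {x | 0 ≤ x ∧ AntitoneAlong R x ∧ ∀ c ∈ 𝒞, ∑ i ∈ c, x i ≤ 1}

section AntitonePolytope

variable {R : ι → ι → Prop} {𝒞 : Set (Finset ι)}

theorem convex_antitonePolytope : Convex ℝ (antitonePolytope R 𝒞) := by
  rintro x ⟨hx0, hxR, hx𝒞⟩ y ⟨hy0, hyR, hy𝒞⟩ θ μ hθ hμ hθμ
  refine ⟨add_nonneg (smul_nonneg hθ hx0) (smul_nonneg hμ hy0), fun i j hij => ?_, fun c hc => ?_⟩
  · simp only [Pi.add_apply, Pi.smul_apply, smul_eq_mul]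
    gcongr
    exacts [hxR i j hij, hyR i j hij]
  · simp only [Pi.add_apply, Pi.smul_apply, smul_eq_mul, Finset.sum_add_distrib,
      ← Finset.mul_sum]
    nlinarith [hx𝒞 c hc, hy𝒞 c hc]

theorem zero_mem_antitonePolytope : (0 : ι → ℝ) ∈ antitonePolytope R 𝒞 :=
  ⟨le_rfl, fun _ _ _ => le_rfl, fun c _ => by simp⟩

theorem mem_smul_antitonePolytope (h𝒞 : ∀ i, ∃ c ∈ 𝒞, i ∈ c) {s : ℝ} (hs : 0 ≤ s)
    {x : ι → ℝ} :
    x ∈ s • antitonePolytope R 𝒞 ↔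
      0 ≤ x ∧ AntitoneAlong R x ∧ ∀ c ∈ 𝒞, ∑ i ∈ c, x i ≤ s := by
  rcases hs.eq_or_lt with rfl | hs
  · rw [Set.zero_smul_set ⟨0, zero_mem_antitonePolytope⟩, Set.mem_zero]
    constructor
    · rintro rfl
      exact ⟨le_rfl, fun _ _ _ => le_rfl, fun c _ => by simp⟩
    · rintro ⟨hx0, -, hxc⟩
      ext i
      obtain ⟨c, hc, hi⟩ := h𝒞 i
      have := (Finset.single_le_sum (fun j _ => hx0 j) hi).trans (hxc c hc)
      exact le_antisymm this (hx0 i)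
  · rw [Set.mem_smul_set_iff_inv_smul_mem₀ hs.ne']
    have hs' : 0 < s⁻¹ := inv_pos.mpr hs
    simp only [antitonePolytope, AntitoneAlong, Set.mem_ofPred_eq, Pi.le_def, Pi.zero_apply,
      Pi.smul_apply, smul_eq_mul, ← Finset.mul_sum, inv_mul_le_iff₀ hs, mul_one,
      mul_inv_cancel_left₀ hs.ne', mul_nonneg_iff_of_pos_left hs']

end AntitonePolytope

theorem AntitoneAlong.tsub_single [DecidableEq ι] {R : ι → ι → Prop} {u : ι → ℕ}
    (hu : AntitoneAlong R u) {i : ι} (hi : ∀ j, R i j → u i ≠ u j) :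
    AntitoneAlong R (u - Pi.single i 1) := by
  intro a b hab
  have := hu a b hab
  simp only [Pi.sub_apply, Pi.single_apply]
  split_ifs with hb ha ha <;> subst_vars
  · exact absurd rfl (hi _ hab)
  · omega
  · have := hi b hab
    omega
  · omega

structure IsTightPair (R S : ι → ι → Prop) (u v : ι → ℕ) : Prop where
  antitone_fst : AntitoneAlong R u
  antitone_snd : AntitoneAlong S v
  /-- lowering both `u i` and `v i` by one would leave `ℕ` or break antitonicity -/
  tight : ∀ i, u i = 0 ∨ v i = 0 ∨ (∃ j, R i j ∧ u i = u j) ∨ ∃ j, S i j ∧ v i = v j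

namespace IsTightPair

variable {R S : ι → ι → Prop} {u v u' v' : ι → ℕ}

theorem symm (h : IsTightPair R S u v) : IsTightPair S R v u :=
  ⟨h.antitone_snd, h.antitone_fst, fun i => by
    rcases h.tight i with h | h | h | h <;> simp only [h, true_or, or_true]⟩

theorem exists_le [Finite ι] {u₀ v₀ : ι → ℕ} (hu : AntitoneAlong R u₀) (hv : AntitoneAlong S v₀) :
    ∃ u v, IsTightPair R S u v ∧ u ≤ u₀ ∧ v ≤ v₀ ∧ u + v₀ = u₀ + v := by
  classical
  induction v₀ using WellFoundedLT.induction generalizing u₀ with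
  | _ v₀ ih =>
  by_cases htight : ∀ i, u₀ i = 0 ∨ v₀ i = 0 ∨ (∃ j, R i j ∧ u₀ i = u₀ j) ∨
      ∃ j, S i j ∧ v₀ i = v₀ j
  · exact ⟨u₀, v₀, ⟨hu, hv, htight⟩, le_rfl, le_rfl, rfl⟩
  push Not at htight
  obtain ⟨i, hui, hvi, hR, hS⟩ := htight
  have hlt : v₀ - Pi.single i 1 < v₀ :=
    Pi.lt_def.mpr ⟨tsub_le_self, i, by simp only [Pi.sub_apply, Pi.single_eq_same]; omega⟩
  obtain ⟨u, v, h, hu', hv', huv⟩ := ih _ hlt (hu.tsub_single hR) (hv.tsub_single hS)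
  refine ⟨u, v, h, hu'.trans tsub_le_self, hv'.trans tsub_le_self, funext fun j => ?_⟩
  have := congrFun huv j
  simp only [Pi.add_apply, Pi.sub_apply, Pi.single_apply] at this ⊢
  split_ifs at this with hj
  · subst hj
    omega
  · omega

theorem le_of_add_eq (hwf : WellFounded fun j i => R i j ∨ S i j) (h : IsTightPair R S u v)
    (hu' : AntitoneAlong R u') (hv' : AntitoneAlong S v') (huv : u + v' = u' + v) : v ≤ v' := by
  have huv' (i : ι) : u i + v' i = u' i + v i := congrFun huv i
  rw [Pi.le_def]
  intro i
  induction i using hwf.induction with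
  | _ i ih =>
  have := huv' i
  rcases h.tight i with h0 | h0 | ⟨j, hj, hij⟩ | ⟨j, hj, hij⟩
  · omega
  · omega
  · have := ih j (Or.inl hj)
    have := huv' j
    have := hu' i j hj
    omega
  · have := ih j (Or.inr hj)
    have := hv' i j hj
    omega

theorem eq_of_add_eq (hwf : WellFounded fun j i => R i j ∨ S i j) (h : IsTightPair R S u v)
    (h' : IsTightPair R S u' v') (huv : u + v' = u' + v) : u = u' ∧ v = v' := by
  have hv : v = v' := le_antisymm (h.le_of_add_eq hwf h'.1 h'.2 huv)
    (h'.le_of_add_eq hwf h.1 h.2 huv.symm)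
  subst hv
  exact ⟨add_right_cancel huv, rfl⟩

end IsTightPair

section Transfer

variable [Fintype ι] {S : ι → ι → Prop}

open Classical in
noncomputable def supAbove (S : ι → ι → Prop) (v : ι → ℕ) (i : ι) : ℕ :=
  (univ.filter (S i)).sup v

theorem le_supAbove (v : ι → ℕ) {i j : ι} (h : S i j) : v j ≤ supAbove S v i := by
  classical
  exact Finset.le_sup (f := v) (by simpa using h)

theorem supAbove_le_iff {v : ι → ℕ} {i : ι} {m : ℕ} :
    supAbove S v i ≤ m ↔ ∀ j, S i j → v j ≤ m := by
  classical
  simp [supAbove]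

theorem supAbove_eq_zero_or_exists (v : ι → ℕ) (i : ι) :
    supAbove S v i = 0 ∨ ∃ j, S i j ∧ supAbove S v i = v j := by
  classical
  rcases (univ.filter (S i)).eq_empty_or_nonempty with h | h
  · left; simp [supAbove, h]
  · obtain ⟨j, hj, hsup⟩ := Finset.exists_mem_eq_sup _ h v
    exact Or.inr ⟨j, by simpa using hj, by simpa [supAbove] using hsup⟩

theorem supAbove_congr {v w : ι → ℕ} {i : ι} (h : ∀ j, S i j → v j = w j) :
    supAbove S v i = supAbove S w i := by
  classical
  exact Finset.sup_congr rfl fun j hj => h j (by simpa using hj)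

theorem AntitoneAlong.supAbove_le {v : ι → ℕ} (hv : AntitoneAlong S v) (i : ι) :
    supAbove S v i ≤ v i :=
  supAbove_le_iff.mpr (hv i)

/-- Stanley's transfer map, taking the order polytope of `S` onto its chain polytope. -/
noncomputable def orderToChain (S : ι → ι → Prop) (v : ι → ℕ) (i : ι) : ℕ :=
  v i - supAbove S v i

open Classical in
noncomputable def chainToOrder (hS : WellFounded (flip S)) (w : ι → ℕ) : ι → ℕ :=
  hS.fix fun i r => w i + (univ.filter (S i)).attach.sup fun j => r j (Finset.mem_filter.mp j.2).2

variable (hS : WellFounded (flip S))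

theorem chainToOrder_eq (w : ι → ℕ) (i : ι) :
    chainToOrder hS w i = w i + supAbove S (chainToOrder hS w) i := by
  rw [chainToOrder, hS.fix_eq, Finset.sup_attach]
  rfl

theorem antitoneAlong_chainToOrder (w : ι → ℕ) : AntitoneAlong S (chainToOrder hS w) :=
  fun i _ h => (le_supAbove _ h).trans <|
    (Nat.le_add_left _ _).trans_eq (chainToOrder_eq hS w i).symm

theorem orderToChain_chainToOrder (w : ι → ℕ) : orderToChain S (chainToOrder hS w) = w := by
  funext i
  rw [orderToChain, chainToOrder_eq hS w i, Nat.add_sub_cancel]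

theorem chainToOrder_orderToChain {v : ι → ℕ} (hv : AntitoneAlong S v) :
    chainToOrder hS (orderToChain S v) = v := by
  funext i
  induction i using hS.induction with
  | _ i ih =>
  rw [chainToOrder_eq, supAbove_congr ih, orderToChain, Nat.sub_add_cancel (hv.supAbove_le i)]

namespace IsTightPair

variable {R : ι → ι → Prop} {u v : ι → ℕ}

theorem orderToChain_snd (h : IsTightPair R S u v) : IsTightPair R ⊥ u (orderToChain S v) := by
  refine ⟨h.antitone_fst, fun _ _ h => h.elim, fun i => ?_⟩
  rcases h.tight i with h0 | h0 | hR | ⟨j, hj, hij⟩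
  · exact Or.inl h0
  · exact Or.inr (Or.inl (by simp [orderToChain, h0]))
  · exact Or.inr (Or.inr (Or.inl hR))
  · refine Or.inr (Or.inl (Nat.sub_eq_zero_of_le ?_))
    exact hij ▸ le_supAbove v hj

theorem chainToOrder_snd (h : IsTightPair R ⊥ u v) :
    IsTightPair R S u (chainToOrder hS v) := by
  refine ⟨h.antitone_fst, antitoneAlong_chainToOrder hS v, fun i => ?_⟩
  rcases h.tight i with h0 | h0 | hR | ⟨j, hj, -⟩
  · exact Or.inl h0
  · rw [chainToOrder_eq, h0, zero_add]
    rcases supAbove_eq_zero_or_exists (S := S) (chainToOrder hS v) i with h1 | ⟨j, hj, h1⟩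
    · exact Or.inr (Or.inl h1)
    · exact Or.inr (Or.inr (Or.inr ⟨j, hj, h1⟩))
  · exact Or.inr (Or.inr (Or.inl hR))
  · exact hj.elim

end IsTightPair

end Transfer

section Chains

theorem IsChain.exists_isLeast {S : PartialOrder ι} {c : Finset ι} (hc : IsChain S.le (c : Set ι))
    (hne : c.Nonempty) : ∃ m ∈ c, ∀ j ∈ c, S.le m j := by
  let _ := S
  obtain ⟨m, hm, hmin⟩ := Finset.exists_minimal hne
  refine ⟨m, hm, fun j hj => ?_⟩
  rcases eq_or_ne m j with rfl | hne
  · exact le_rfl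
  · exact (hc hm hj hne).elim id fun hjm => hmin hj hjm

variable [Fintype ι] (S : PartialOrder ι)

theorem wellFounded_flip_lt : WellFounded (flip S.lt) := by
  let _ := S
  exact wellFounded_gt

theorem exists_isMaxChain_superset {c : Finset ι} (hc : IsChain S.le (c : Set ι)) :
    ∃ t : Finset ι, IsMaxChain S.le (t : Set ι) ∧ c ⊆ t := by
  classical
  obtain ⟨M, hM, hcM⟩ := hc.exists_maxChain
  exact ⟨M.toFinset, by simpa using hM, fun i hi => by simpa using hcM hi⟩

theorem exists_isMaxChain_mem (i : ι) :
    ∃ t ∈ {t : Finset ι | IsMaxChain S.le (t : Set ι)}, i ∈ t := by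
  obtain ⟨t, ht, hit⟩ := exists_isMaxChain_superset S (c := {i}) (by simp)
  exact ⟨t, ht, hit (Finset.mem_singleton_self i)⟩

variable {S} {v : ι → ℕ} (hv : AntitoneAlong S.lt v)
include hv

theorem sum_orderToChain_le_supAbove {c : Finset ι} (hc : IsChain S.le (c : Set ι)) {i : ι}
    (hi : ∀ j ∈ c, S.lt i j) : ∑ j ∈ c, orderToChain S.lt v j ≤ supAbove S.lt v i := by
  classical
  induction c using Finset.strongInduction generalizing i with
  | _ c ih =>
  rcases c.eq_empty_or_nonempty with rfl | hne
  · simp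
  obtain ⟨m, hm, hmin⟩ := hc.exists_isLeast hne
  have hrest : ∑ j ∈ c.erase m, orderToChain S.lt v j ≤ supAbove S.lt v m :=
    ih _ (Finset.erase_ssubset hm) (hc.mono (by simp)) fun j hj =>
      lt_of_le_of_ne (hmin j (Finset.mem_of_mem_erase hj)) (Finset.ne_of_mem_erase hj).symm
  rw [← Finset.add_sum_erase _ _ hm, orderToChain]
  have := hv.supAbove_le m
  have := le_supAbove v (hi m hm)
  omega

theorem sum_orderToChain_le {c : Finset ι} (hc : IsChain S.le (c : Set ι)) {m : ℕ}
    (hm : ∀ i, v i ≤ m) : ∑ j ∈ c, orderToChain S.lt v j ≤ m := by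
  classical
  rcases c.eq_empty_or_nonempty with rfl | hne
  · simp
  obtain ⟨i, hi, hmin⟩ := hc.exists_isLeast hne
  have hrest := sum_orderToChain_le_supAbove hv (hc.mono (by simp)) fun j hj =>
    lt_of_le_of_ne (hmin j (Finset.mem_of_mem_erase hj)) (Finset.ne_of_mem_erase hj).symm
  rw [← Finset.add_sum_erase _ _ hi, orderToChain]
  have := hv.supAbove_le i
  have := hm i
  omega

theorem exists_isChain_le_sum_orderToChain (i : ι) :
    ∃ c : Finset ι, IsChain S.le (c : Set ι) ∧ v i ≤ ∑ j ∈ c, orderToChain S.lt v j ∧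
      ∀ j ∈ c, S.le i j := by
  classical
  induction i using (wellFounded_flip_lt S).induction with
  | _ i ih =>
  rcases supAbove_eq_zero_or_exists (S := S.lt) v i with h0 | ⟨j, hij, hj⟩
  · exact ⟨{i}, by simp, by simp [orderToChain, h0], by simp⟩
  obtain ⟨c, hc, hvc, hjc⟩ := ih j hij
  have hic : i ∉ c := fun h => (hij.trans_le (hjc i h)).false
  refine ⟨insert i c, ?_, ?_, ?_⟩
  · rw [Finset.coe_insert]
    exact hc.insert fun k hk _ => Or.inl (hij.le.trans (hjc k hk))
  · rw [Finset.sum_insert hic, orderToChain]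
    have := hv.supAbove_le i
    omega
  · simpa using fun k hk => hij.le.trans (hjc k hk)

theorem forall_le_iff_sum_orderToChain_le (m : ℕ) :
    (∀ i, v i ≤ m) ↔ ∀ c : Finset ι, IsMaxChain S.le (c : Set ι) →
      ∑ j ∈ c, orderToChain S.lt v j ≤ m := by
  refine ⟨fun hm c hc => sum_orderToChain_le hv hc.isChain hm, fun h i => ?_⟩
  obtain ⟨c, hc, hvc, -⟩ := exists_isChain_le_sum_orderToChain hv i
  obtain ⟨t, ht, hct⟩ := exists_isMaxChain_superset S hc
  exact hvc.trans ((Finset.sum_le_sum_of_subset hct).trans (h t ht))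

end Chains

section Omega

variable {d : ℕ}

theorem Convex.image_snoc {A : Set (Fin d → ℝ)} (hA : Convex ℝ A)
    (f : (Fin d → ℝ) →ₗ[ℝ] Fin d → ℝ) (t : ℝ) :
    Convex ℝ ((fun x => (Fin.snoc (f x) t : Fin (d + 1) → ℝ)) '' A) := by
  rintro _ ⟨a, ha, rfl⟩ _ ⟨b, hb, rfl⟩ θ μ hθ hμ hθμ
  refine ⟨θ • a + μ • b, hA ha hb hθ hμ hθμ, funext fun i => ?_⟩
  refine Fin.lastCases ?_ (fun j => ?_) i
  · simp [← add_mul, hθμ]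
  · simp

theorem smul_snoc_add_smul_snoc (θ μ : ℝ) (a b : Fin d → ℝ) :
    θ • (Fin.snoc a 1 : Fin (d + 1) → ℝ) + μ • Fin.snoc (-b) (-1) =
      Fin.snoc (θ • a - μ • b) (θ - μ) := by
  funext i
  refine Fin.lastCases ?_ (fun j => ?_) i
  · simp [sub_eq_add_neg]
  · simp [sub_eq_add_neg]

theorem smul_snoc (n : ℝ) (x : Fin d → ℝ) (t : ℝ) :
    n • (Fin.snoc x t : Fin (d + 1) → ℝ) = Fin.snoc (n • x) (n * t) := by
  funext i
  refine Fin.lastCases ?_ (fun j => ?_) i <;> simp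

theorem snoc_mem_smul_omegaPoly_iff {A B : Set (Fin d → ℝ)} (hA : Convex ℝ A) (hB : Convex ℝ B)
    (hA₀ : A.Nonempty) (hB₀ : B.Nonempty) {n : ℝ} (hn : 0 < n) (x : Fin d → ℝ) (t : ℝ) :
    Fin.snoc x t ∈ n • OmegaPoly A B ↔
      |t| ≤ n ∧ x ∈ ((n + t) / 2) • A - ((n - t) / 2) • B := by
  have hA' : Convex ℝ ((fun x => (Fin.snoc x 1 : Fin (d + 1) → ℝ)) '' A) :=
    hA.image_snoc LinearMap.id 1
  have hB' : Convex ℝ ((fun x => (Fin.snoc (-x) (-1) : Fin (d + 1) → ℝ)) '' B) :=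
    hB.image_snoc (-LinearMap.id) (-1)
  rw [Set.mem_smul_set_iff_inv_smul_mem₀ hn.ne', smul_snoc]
  constructor
  · intro h
    rw [OmegaPoly, hA'.convexHull_union hB' (hA₀.image _) (hB₀.image _), mem_convexJoin] at h
    obtain ⟨_, ⟨a, ha, rfl⟩, _, ⟨b, hb, rfl⟩, θ, μ, hθ, hμ, hθμ, h⟩ := h
    rw [smul_snoc_add_smul_snoc] at h
    obtain ⟨hx, ht⟩ := Fin.snoc_injective2 h
    have ht' : t = n * (θ - μ) := by
      rw [ht, mul_inv_cancel_left₀ hn.ne']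
    have hs : (n + t) / 2 = n * θ := by
      rw [ht']; linear_combination (-n / 2) * hθμ
    have hs' : (n - t) / 2 = n * μ := by
      rw [ht']; linear_combination (-n / 2) * hθμ
    refine ⟨abs_le.mpr ⟨?_, ?_⟩, _, Set.smul_mem_smul_set ha, _, Set.smul_mem_smul_set hb, ?_⟩
    · nlinarith
    · nlinarith
    · beta_reduce
      rw [hs, hs', ← smul_smul, ← smul_smul, ← smul_sub, hx, smul_inv_smul₀ hn.ne']
  · rintro ⟨ht, _, ⟨a, ha, rfl⟩, _, ⟨b, hb, rfl⟩, rfl⟩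
    obtain ⟨ht₁, ht₂⟩ := abs_le.mp ht
    have hmem : (Fin.snoc a 1 : Fin (d + 1) → ℝ) ∈ OmegaPoly A B :=
      subset_convexHull ℝ _ (Or.inl ⟨a, ha, rfl⟩)
    have hmem' : (Fin.snoc (-b) (-1) : Fin (d + 1) → ℝ) ∈ OmegaPoly A B :=
      subset_convexHull ℝ _ (Or.inr ⟨b, hb, rfl⟩)
    have hcomb : (Fin.snoc (n⁻¹ • (((n + t) / 2) • a - ((n - t) / 2) • b)) (n⁻¹ * t) :
        Fin (d + 1) → ℝ) =
          ((n + t) / 2 / n) • Fin.snoc a 1 + ((n - t) / 2 / n) • Fin.snoc (-b) (-1) := by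
      rw [smul_snoc_add_smul_snoc, smul_sub, smul_smul, smul_smul]
      congr 2
      · field_simp
      · field_simp
      · field_simp; ring
    rw [hcomb]
    exact convex_convexHull ℝ _ hmem hmem' (div_nonneg (by linarith) hn.le)
      (div_nonneg (by linarith) hn.le) (by field_simp; ring)

end Omega

section Lattice

variable {R S : ι → ι → Prop} {𝒞 𝒞₁ 𝒞₂ : Set (Finset ι)}

theorem natCast_mem_smul_antitonePolytope (h𝒞 : ∀ i, ∃ c ∈ 𝒞, i ∈ c) {s : ℝ} (hs : 0 ≤ s)
    {u : ι → ℕ} (hu : AntitoneAlong R u) (hu𝒞 : ∀ c ∈ 𝒞, ∑ i ∈ c, u i ≤ ⌊s⌋₊) :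
    (fun i => (u i : ℝ)) ∈ s • antitonePolytope R 𝒞 :=
  (mem_smul_antitonePolytope h𝒞 hs).mpr ⟨fun i => Nat.cast_nonneg _,
    fun i j hij => Nat.cast_le.mpr (hu i j hij),
    fun c hc => by exact_mod_cast (Nat.cast_le.mpr (hu𝒞 c hc)).trans (Nat.floor_le hs)⟩

theorem intCast_mem_smul_sub_smul_iff [Finite ι] (h𝒞₁ : ∀ i, ∃ c ∈ 𝒞₁, i ∈ c)
    (h𝒞₂ : ∀ i, ∃ c ∈ 𝒞₂, i ∈ c) {s s' : ℝ} (hs : 0 ≤ s) (hs' : 0 ≤ s') (y : ι → ℤ) :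
    (fun i => (y i : ℝ)) ∈ s • antitonePolytope R 𝒞₁ - s' • antitonePolytope S 𝒞₂ ↔
      ∃ u v, IsTightPair R S u v ∧ (∀ c ∈ 𝒞₁, ∑ i ∈ c, u i ≤ ⌊s⌋₊) ∧
        (∀ c ∈ 𝒞₂, ∑ i ∈ c, v i ≤ ⌊s'⌋₊) ∧ y = fun i => (u i : ℤ) - v i := by
  constructor
  · rintro ⟨a, ha, b, hb, hab⟩
    obtain ⟨ha0, haR, ha𝒞⟩ := (mem_smul_antitonePolytope h𝒞₁ hs).mp ha
    obtain ⟨hb0, hbS, hb𝒞⟩ := (mem_smul_antitonePolytope h𝒞₂ hs').mp hb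
    have hfloor : ∀ i, (⌊a i⌋₊ : ℤ) = y i + ⌊b i⌋₊ := fun i => by
      rw [Int.natCast_floor_eq_floor (ha0 i), Int.natCast_floor_eq_floor (hb0 i),
        ← Int.floor_intCast_add, ← congrFun hab i]
      simp
    obtain ⟨u, v, h, hu, hv, huv⟩ := IsTightPair.exists_le (R := R) (S := S)
      (u₀ := fun i => ⌊a i⌋₊) (v₀ := fun i => ⌊b i⌋₊)
      (fun i j hij => Nat.floor_mono (haR i j hij)) (fun i j hij => Nat.floor_mono (hbS i j hij))
    refine ⟨u, v, h, fun c hc => Nat.le_floor ?_, fun c hc => Nat.le_floor ?_, funext fun i => ?_⟩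
    · push_cast
      exact (Finset.sum_le_sum fun i _ => (Nat.cast_le.mpr (hu i)).trans
        (Nat.floor_le (ha0 i))).trans (ha𝒞 c hc)
    · push_cast
      exact (Finset.sum_le_sum fun i _ => (Nat.cast_le.mpr (hv i)).trans
        (Nat.floor_le (hb0 i))).trans (hb𝒞 c hc)
    · have : u i + ⌊b i⌋₊ = ⌊a i⌋₊ + v i := congrFun huv i
      have := hfloor i
      omega
  · rintro ⟨u, v, h, hu, hv, rfl⟩
    exact ⟨_, natCast_mem_smul_antitonePolytope h𝒞₁ hs h.antitone_fst hu,
      _, natCast_mem_smul_antitonePolytope h𝒞₂ hs' h.antitone_snd hv, by ext; simp⟩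

/-- `(k, u, v)` stands for the lattice point `(u - v, k)` of `n • Ω`. -/
def tightTriples (R S : ι → ι → Prop) (𝒞₁ 𝒞₂ : Set (Finset ι)) (n : ℕ) :
    Set (ℤ × (ι → ℕ) × (ι → ℕ)) :=
  {t | |t.1| ≤ n ∧ IsTightPair R S t.2.1 t.2.2 ∧
    (∀ c ∈ 𝒞₁, ∑ i ∈ c, t.2.1 i ≤ ⌊((n : ℝ) + t.1) / 2⌋₊) ∧
    ∀ c ∈ 𝒞₂, ∑ i ∈ c, t.2.2 i ≤ ⌊((n : ℝ) - t.1) / 2⌋₊}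

theorem ehrhart_omegaPoly_eq_ncard_tightTriples {d : ℕ} {R S : Fin d → Fin d → Prop}
    {𝒞₁ 𝒞₂ : Set (Finset (Fin d))} (hwf : WellFounded fun j i => R i j ∨ S i j)
    (h𝒞₁ : ∀ i, ∃ c ∈ 𝒞₁, i ∈ c) (h𝒞₂ : ∀ i, ∃ c ∈ 𝒞₂, i ∈ c) {n : ℕ} (hn : 0 < n) :
    ehrhart (OmegaPoly (antitonePolytope R 𝒞₁) (antitonePolytope S 𝒞₂)) n =
      (tightTriples R S 𝒞₁ 𝒞₂ n).ncard := by
  let e (t : ℤ × (Fin d → ℕ) × (Fin d → ℕ)) : Fin (d + 1) → ℤ :=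
    Fin.snoc (fun i => (t.2.1 i : ℤ) - t.2.2 i) t.1
  have hinj : Set.InjOn e (tightTriples R S 𝒞₁ 𝒞₂ n) := by
    rintro ⟨k, u, v⟩ ⟨-, h, -⟩ ⟨k', u', v'⟩ ⟨-, h', -⟩ he
    obtain ⟨huv, rfl⟩ := Fin.snoc_injective2 he
    obtain ⟨rfl, rfl⟩ := h.eq_of_add_eq hwf h' <| funext fun i => by
      have : (u i : ℤ) - v i = u' i - v' i := congrFun huv i
      simp only [Pi.add_apply]
      omega
    rfl
  rw [ehrhart, ← hinj.ncard_image]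
  congr 1
  ext a
  obtain ⟨y, k, rfl⟩ : ∃ y k, a = Fin.snoc y k := ⟨_, _, (Fin.snoc_init_self a).symm⟩
  have hcast : (fun i => ((Fin.snoc y k : Fin (d + 1) → ℤ) i : ℝ)) =
      Fin.snoc (fun i => (y i : ℝ)) (k : ℝ) := Fin.comp_snoc _ _ _
  rw [Set.mem_ofPred_eq, hcast, snoc_mem_smul_omegaPoly_iff convex_antitonePolytope
    convex_antitonePolytope ⟨0, zero_mem_antitonePolytope⟩ ⟨0, zero_mem_antitonePolytope⟩
    (by exact_mod_cast hn)]
  constructor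
  · rintro ⟨hk, hy⟩
    obtain ⟨hk₁, hk₂⟩ := abs_le.mp hk
    obtain ⟨u, v, h, hu, hv, rfl⟩ := (intCast_mem_smul_sub_smul_iff h𝒞₁ h𝒞₂
      (by linarith) (by linarith) y).mp hy
    exact ⟨(k, u, v), ⟨by exact_mod_cast hk, h, hu, hv⟩, rfl⟩
  · rintro ⟨⟨k, u, v⟩, ⟨hk, h, hu, hv⟩, he⟩
    obtain ⟨rfl, rfl⟩ := Fin.snoc_injective2 he
    have hk' : |(k : ℝ)| ≤ n := by exact_mod_cast hk
    obtain ⟨hk₁, hk₂⟩ := abs_le.mp hk'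
    exact ⟨hk', (intCast_mem_smul_sub_smul_iff h𝒞₁ h𝒞₂ (by linarith) (by linarith) _).mpr
      ⟨u, v, h, hu, hv, rfl⟩⟩

end Lattice

section Bijections

theorem ncard_tightTriples_swap (R S : ι → ι → Prop) (𝒞₁ 𝒞₂ : Set (Finset ι)) (n : ℕ) :
    (tightTriples R S 𝒞₁ 𝒞₂ n).ncard = (tightTriples S R 𝒞₂ 𝒞₁ n).ncard := by
  let f (t : ℤ × (ι → ℕ) × (ι → ℕ)) : ℤ × (ι → ℕ) × (ι → ℕ) := (-t.1, t.2.2, t.2.1)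
  have hf : ∀ {R S 𝒞₁ 𝒞₂}, Set.MapsTo f (tightTriples R S 𝒞₁ 𝒞₂ n) (tightTriples S R 𝒞₂ 𝒞₁ n) := by
    rintro R S 𝒞₁ 𝒞₂ ⟨k, u, v⟩ ⟨hk, h, hu, hv⟩
    refine ⟨by simpa [f] using hk, h.symm, fun c hc => ?_, fun c hc => ?_⟩
    · simpa [f, sub_eq_add_neg] using hv c hc
    · simpa [f] using hu c hc
  exact (Set.InvOn.bijOn ⟨fun t _ => by simp [f], fun t _ => by simp [f]⟩ hf hf).ncard_eq

theorem ncard_tightTriples_orderToChain [Fintype ι] (R : ι → ι → Prop) (S : PartialOrder ι)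
    (𝒞 : Set (Finset ι)) (n : ℕ) :
    (tightTriples R S.lt 𝒞 (Set.range singleton) n).ncard =
      (tightTriples R ⊥ 𝒞 {c | IsMaxChain S.le (c : Set ι)} n).ncard := by
  have hS := wellFounded_flip_lt S
  refine Set.BijOn.ncard_eq (f := fun t => (t.1, t.2.1, orderToChain S.lt t.2.2)) <|
    Set.InvOn.bijOn (f' := fun t => (t.1, t.2.1, chainToOrder hS t.2.2)) ⟨?_, ?_⟩ ?_ ?_
  · rintro ⟨k, u, v⟩ ⟨-, h, -⟩
    simp [chainToOrder_orderToChain hS h.antitone_snd]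
  · rintro ⟨k, u, w⟩ -
    simp [orderToChain_chainToOrder hS]
  · rintro ⟨k, u, v⟩ ⟨hk, h, hu, hv⟩
    refine ⟨hk, h.orderToChain_snd, hu, ?_⟩
    exact (forall_le_iff_sum_orderToChain_le h.antitone_snd _).mp (by simpa using hv)
  · rintro ⟨k, u, w⟩ ⟨hk, h, hu, hw⟩
    refine ⟨hk, h.chainToOrder_snd hS, hu, ?_⟩
    have := (forall_le_iff_sum_orderToChain_le (antitoneAlong_chainToOrder hS w) _).mpr
      (by simpa [orderToChain_chainToOrder hS] using hw)
    simpa using this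

end Bijections

section Polytopes

variable {d : ℕ} (P : PartialOrder (Fin d))

theorem orderPolytope_eq_antitonePolytope :
    orderPolytope P.le = antitonePolytope P.lt (Set.range singleton) := by
  ext x
  simp only [orderPolytope, antitonePolytope, AntitoneAlong, Set.mem_ofPred_eq,
    Set.forall_mem_range, Finset.sum_singleton, Pi.le_def, Pi.zero_apply, forall_and]
  refine ⟨fun ⟨⟨h0, h1⟩, hP⟩ => ⟨h0, fun i j hij => hP i j hij.le, h1⟩,
    fun ⟨h0, hP, h1⟩ => ⟨⟨h0, h1⟩, fun i j hij => ?_⟩⟩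
  rcases eq_or_ne i j with rfl | hne
  · exact le_rfl
  · exact hP i j (lt_of_le_of_ne hij hne)

theorem chainPolytope_eq_antitonePolytope :
    chainPolytope P.le = antitonePolytope ⊥ {c | IsMaxChain P.le (c : Set (Fin d))} := by
  ext x
  simp only [chainPolytope, antitonePolytope, AntitoneAlong, Set.mem_ofPred_eq, Pi.le_def,
    Pi.zero_apply]
  exact ⟨fun ⟨h0, h1⟩ => ⟨h0, fun _ _ h => h.elim, h1⟩, fun ⟨h0, _, h1⟩ => ⟨h0, h1⟩⟩

end Polytopes

theorem wellFounded_of_rank {m : ℕ} {r : ι → ι → Prop} (ρ : ι → Fin m)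
    (h : ∀ i j, r i j → (ρ i : ℕ) < ρ j) : WellFounded (flip r) :=
  Subrelation.wf (fun {_ _} hr => h _ _ hr) (InvImage.wf ρ wellFounded_gt)

/-- If `P` and `Q` have a common linear extension `σ`, then the Ehrhart
polynomials of `Ω(O_P, O_Q)`, `Ω(O_P, C_Q)` and `Ω(C_P, C_Q)` coincide. -/
theorem ehrhart_Omega_eq (d : ℕ) (P Q : PartialOrder (Fin d))
    (σ : Equiv.Perm (Fin d))
    (hP : ∀ a b : Fin d, P.lt (σ a) (σ b) → a < b)
    (hQ : ∀ a b : Fin d, Q.lt (σ a) (σ b) → a < b) :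
    ∀ n : ℕ, 1 ≤ n →
      ehrhart (OmegaPoly (orderPolytope P.le) (orderPolytope Q.le)) n =
        ehrhart (OmegaPoly (orderPolytope P.le) (chainPolytope Q.le)) n ∧
      ehrhart (OmegaPoly (orderPolytope P.le) (chainPolytope Q.le)) n =
        ehrhart (OmegaPoly (chainPolytope P.le) (chainPolytope Q.le)) n := by
  intro n hn
  have hwf (R S : Fin d → Fin d → Prop) (hR : ∀ i j, R i j → P.lt i j)
      (hS : ∀ i j, S i j → Q.lt i j) : WellFounded fun j i => R i j ∨ S i j := by
    refine wellFounded_of_rank σ.symm fun i j h => ?_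
    rcases h with h | h
    · exact hP _ _ (by simpa using hR i j h)
    · exact hQ _ _ (by simpa using hS i j h)
  have hpt (i : Fin d) : ∃ c ∈ Set.range (singleton : Fin d → Finset (Fin d)), i ∈ c :=
    ⟨{i}, ⟨i, rfl⟩, Finset.mem_singleton_self i⟩
  rw [orderPolytope_eq_antitonePolytope P, orderPolytope_eq_antitonePolytope Q,
    chainPolytope_eq_antitonePolytope P, chainPolytope_eq_antitonePolytope Q,
    ehrhart_omegaPoly_eq_ncard_tightTriples (hwf _ _ (fun _ _ => id) fun _ _ => id) hpt hpt hn,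
    ehrhart_omegaPoly_eq_ncard_tightTriples (hwf _ _ (fun _ _ => id) fun _ _ h => h.elim) hpt
      (exists_isMaxChain_mem Q) hn,
    ehrhart_omegaPoly_eq_ncard_tightTriples (hwf _ _ (fun _ _ h => h.elim) fun _ _ h => h.elim)
      (exists_isMaxChain_mem P) (exists_isMaxChain_mem Q) hn]
  refine ⟨ncard_tightTriples_orderToChain _ _ _ _, ?_⟩
  rw [ncard_tightTriples_swap, ncard_tightTriples_orderToChain ⊥ P, ncard_tightTriples_swap]
end

section
/- For finite posets P and Q on d elements, every lattice point of ℤ^{d+2} is an integer linear combination of the lattice points of Ω(C_P, C_Q) × {1}; i.e., the lattice points of Ω(C_P,C_Q) × {1} generate ℤ^{d+2} as a group. -/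
/-!
The origin lies in `Ω(C_P, C_Q)` as the midpoint of `(0, 1)` and `(0, -1)`, and so do `(0, 1)`
and `(e_i, 1)`, because every chain polytope contains `0` and the unit vectors. At height one these
give the lattice points `(0, 0, 1)`, `(0, 1, 1)` and `(e_i, 1, 1)`, whose successive differences
are the unit vectors of `ℤ^{d+2}`.
-/

open Fin

theorem AddSubgroup.closure_eq_top_of_single_mem {ι : Type*} [Fintype ι] [DecidableEq ι]
    {S : Set (ι → ℤ)} (h : ∀ i, Pi.single i 1 ∈ closure S) : closure S = ⊤ :=
  (eq_top_iff' _).2 fun a => by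
    rw [← Finset.univ_sum_single a]
    exact sum_mem fun i _ => by
      simpa only [← Pi.single_smul', smul_eq_mul, mul_one] using zsmul_mem (h i) (a i)

section Snoc

variable {m : ℕ} {α : Type*}

theorem Fin.single_last_eq_snoc [Zero α] (a : α) :
    (Pi.single (last m) a : Fin (m + 1) → α) = snoc 0 a := by
  ext k
  refine lastCases ?_ (fun k => ?_) k <;> simp

theorem Fin.single_castSucc_eq_snoc [Zero α] (j : Fin m) (a : α) :
    (Pi.single (castSucc j) a : Fin (m + 1) → α) = snoc (Pi.single j a) 0 := by
  ext k
  refine lastCases ?_ (fun k => ?_) k <;> simp [Pi.single_apply]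

theorem Fin.snoc_sub_snoc [Sub α] (x y : Fin m → α) (a b : α) :
    (snoc x a : Fin (m + 1) → α) - snoc y b = snoc (x - y) (a - b) := by
  ext k
  refine lastCases ?_ (fun k => ?_) k <;> simp

end Snoc

def latticePointsAtHeightOne {m : ℕ} (K : Set (Fin m → ℝ)) : Set (Fin (m + 1) → ℤ) :=
  {a | a (Fin.last m) = 1 ∧ (fun i : Fin m => (a (Fin.castSucc i) : ℝ)) ∈ K}

theorem snoc_mem_latticePointsAtHeightOne {m : ℕ} {K : Set (Fin m → ℝ)} {b : Fin m → ℤ}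
    (hb : (fun i => (b i : ℝ)) ∈ K) : snoc b 1 ∈ latticePointsAtHeightOne K :=
  ⟨snoc_last _ _, by simpa using hb⟩

theorem closure_latticePointsAtHeightOne_eq_top {m : ℕ} {K : Set (Fin m → ℝ)}
    (h0 : 0 ∈ K)
    (hK : ∀ j, ∃ y z : Fin m → ℤ, (fun i => (y i : ℝ)) ∈ K ∧ (fun i => (z i : ℝ)) ∈ K ∧
      z - y = Pi.single j 1) :
    AddSubgroup.closure (latticePointsAtHeightOne K) = ⊤ := by
  refine AddSubgroup.closure_eq_top_of_single_mem fun j => lastCases ?_ (fun j => ?_) j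
  · rw [single_last_eq_snoc]
    exact AddSubgroup.subset_closure (snoc_mem_latticePointsAtHeightOne (by convert h0; simp))
  · obtain ⟨y, z, hy, hz, hzy⟩ := hK j
    rw [single_castSucc_eq_snoc, ← hzy, ← sub_self (1 : ℤ), ← snoc_sub_snoc]
    exact sub_mem (AddSubgroup.subset_closure (snoc_mem_latticePointsAtHeightOne hz))
      (AddSubgroup.subset_closure (snoc_mem_latticePointsAtHeightOne hy))

section ChainPolytope

variable {d : ℕ} (r : Fin d → Fin d → Prop)

theorem zero_mem_chainPolytope : (0 : Fin d → ℝ) ∈ chainPolytope r :=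
  ⟨fun _ => le_rfl, fun c _ => by simp⟩

theorem single_mem_chainPolytope (i : Fin d) :
    (Pi.single i 1 : Fin d → ℝ) ∈ chainPolytope r := by
  refine ⟨fun j => ?_, fun c _ => ?_⟩
  · rcases eq_or_ne j i with rfl | h <;> simp [*]
  · rw [Finset.sum_pi_single']
    split_ifs <;> norm_num

end ChainPolytope

section OmegaPoly

variable {d : ℕ} {A B : Set (Fin d → ℝ)}

theorem snoc_one_mem_omegaPoly {x : Fin d → ℝ} (hx : x ∈ A) : snoc x 1 ∈ OmegaPoly A B :=
  subset_convexHull ℝ _ (Or.inl ⟨x, hx, rfl⟩)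

theorem snoc_neg_one_mem_omegaPoly {x : Fin d → ℝ} (hx : x ∈ B) :
    snoc (-x) (-1) ∈ OmegaPoly A B :=
  subset_convexHull ℝ _ (Or.inr ⟨x, hx, rfl⟩)

theorem zero_mem_omegaPoly (hA : 0 ∈ A) (hB : 0 ∈ B) : 0 ∈ OmegaPoly A B := by
  have : midpoint ℝ (snoc 0 1 : Fin (d + 1) → ℝ) (snoc (-0) (-1)) ∈ OmegaPoly A B :=
    (convex_convexHull ℝ _).midpoint_mem (snoc_one_mem_omegaPoly hA)
      (snoc_neg_one_mem_omegaPoly hB)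
  convert this using 1
  ext k
  refine lastCases ?_ (fun k => ?_) k <;> simp [midpoint_eq_smul_add]

theorem intCast_snoc_one_mem_omegaPoly {b : Fin d → ℤ} (hb : (fun i => (b i : ℝ)) ∈ A) :
    (fun i => ((snoc b 1 : Fin (d + 1) → ℤ) i : ℝ)) ∈ OmegaPoly A B := by
  convert snoc_one_mem_omegaPoly hb using 1
  ext k
  refine lastCases ?_ (fun k => ?_) k <;> simp

end OmegaPoly

/-- For any finite posets `P` and `Q` on `d` elements, the lattice points of
`Ω(C_P, C_Q) × {1} ⊂ ℝ^{d+2}` generate `ℤ^{d+2}` as a group: every lattice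
point of `ℤ^{d+2}` is an integer linear combination of them. -/
theorem lattice_points_generate (d : ℕ) (P Q : PartialOrder (Fin d)) :
    AddSubgroup.closure
      {a : Fin (d + 2) → ℤ | a (Fin.last (d + 1)) = 1 ∧
        (fun i : Fin (d + 1) => (a (Fin.castSucc i) : ℝ)) ∈
          OmegaPoly (chainPolytope P.le) (chainPolytope Q.le)} = ⊤ := by
  have h0 : (0 : Fin (d + 1) → ℝ) ∈ OmegaPoly (chainPolytope P.le) (chainPolytope Q.le) :=
    zero_mem_omegaPoly (zero_mem_chainPolytope _) (zero_mem_chainPolytope _)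
  have hbase : (fun i => ((snoc 0 1 : Fin (d + 1) → ℤ) i : ℝ)) ∈
      OmegaPoly (chainPolytope P.le) (chainPolytope Q.le) :=
    intCast_snoc_one_mem_omegaPoly (by convert zero_mem_chainPolytope _; simp)
  refine closure_latticePointsAtHeightOne_eq_top h0 fun j => lastCases ?_ (fun i => ?_) j
  · exact ⟨0, snoc 0 1, by convert h0; simp, hbase, by rw [sub_zero, single_last_eq_snoc]⟩
  · refine ⟨snoc 0 1, snoc (Pi.single i 1) 1, hbase, ?_, ?_⟩
    · exact intCast_snoc_one_mem_omegaPoly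
        (by convert single_mem_chainPolytope _ i; simp [Pi.single_apply])
    · rw [snoc_sub_snoc, sub_zero, sub_self, single_castSucc_eq_snoc]
end
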